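/- For natural numbers n ≥ 1, k ≥ 1, and any real number N (or element of a field of characteristic zero), ∏_{i=1}^{k} (1 - N/(n+i)) = Σ_{j=0}^{k} (-1)^j · C(k,j) · (N)_{(j)} / (n+k)_{(j)}, where (N)_{(j)} = N(N-1)···(N-j+1) and (n+k)_{(j)} = (n+k)(n+k-1)···(n+k-j+1). -/

import Mathlib

/-!
Write `(x)^{(k)} = x (x + 1) ⋯ (x + k - 1)` for the rising factorial. The left side is
`(n + 1 - N)^{(k)} / (n + 1)^{(k)}`. Expanding the numerator by the Chu–Vandermonde identity at
`-N` and `n + 1`, and using `(-N)^{(j)} = (-1)^j (N)_{(j)}` together with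
`(n + 1)^{(k)} = (n + 1)^{(k - j)} (n + k)_{(j)}`, gives the right side term by term.
-/

open Finset Polynomial

namespace Polynomial

variable {R : Type*} [CommRing R]

theorem ascPochhammer_eval_eq_prod_range (k : ℕ) (x : R) :
    (ascPochhammer R k).eval x = ∏ i ∈ range k, (x + i) := by
  induction k with
  | zero => simp
  | succ k ih => rw [ascPochhammer_succ_eval, ih, prod_range_succ]

theorem ascPochhammer_add_eval (a b : ℕ) (x : R) :
    (ascPochhammer R (a + b)).eval x =
      (ascPochhammer R a).eval x * (ascPochhammer R b).eval (x + a) := by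
  simp_rw [ascPochhammer_eval_eq_prod_range, prod_range_add, Nat.cast_add, add_assoc]

theorem descPochhammer_smeval_eq_eval (k : ℕ) (x : R) :
    (descPochhammer ℤ k).smeval x = (descPochhammer R k).eval x := by
  rw [descPochhammer_smeval_eq_ascPochhammer, ascPochhammer_smeval_eq_eval,
    descPochhammer_eval_eq_ascPochhammer]

theorem ascPochhammer_eval_add (k : ℕ) (x y : R) :
    (ascPochhammer R k).eval (x + y) = ∑ ij ∈ antidiagonal k,
      k.choose ij.1 * ((ascPochhammer R ij.1).eval x * (ascPochhammer R ij.2).eval y) := by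
  have hneg (j : ℕ) (z : R) :
      (ascPochhammer R j).eval z = (-1) ^ j * (descPochhammer R j).eval (-z) := by
    rw [← ascPochhammer_eval_neg_eq_descPochhammer, neg_neg]
  rw [hneg, neg_add, ← descPochhammer_smeval_eq_eval,
    Ring.descPochhammer_smeval_add k (Commute.all _ _), mul_sum]
  refine sum_congr rfl fun ij hij => ?_
  rw [← mem_antidiagonal.mp hij, hneg, hneg, descPochhammer_smeval_eq_eval,
    descPochhammer_smeval_eq_eval, pow_add]
  ring

end Polynomial

section RisingFactorialRatio

variable {K : Type*} [Field K]

theorem prod_one_sub_div_eq_ascPochhammer_div (k : ℕ) (a x : K)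
    (ha : ∀ i ∈ range k, a + i ≠ 0) :
    ∏ i ∈ range k, (1 - x / (a + i)) =
      (ascPochhammer K k).eval (a - x) / (ascPochhammer K k).eval a := by
  rw [ascPochhammer_eval_eq_prod_range, ascPochhammer_eval_eq_prod_range, ← prod_div_distrib]
  refine prod_congr rfl fun i hi => ?_
  field_simp [ha i hi]
  ring

theorem ascPochhammer_eval_sub_div_eq_sum (k : ℕ) (a x : K)
    (ha : (ascPochhammer K k).eval a ≠ 0) :
    (ascPochhammer K k).eval (a - x) / (ascPochhammer K k).eval a =
      ∑ j ∈ range (k + 1), (-1) ^ j * k.choose j * (descPochhammer K j).eval x /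
        (descPochhammer K j).eval (a + k - 1) := by
  rw [sub_eq_neg_add, ascPochhammer_eval_add, Nat.sum_antidiagonal_eq_sum_range_succ_mk, sum_div]
  refine sum_congr rfl fun j hj => ?_
  have hjk : j ≤ k := Nat.lt_succ_iff.mp (mem_range.mp hj)
  have hsplit : (ascPochhammer K k).eval a =
      (ascPochhammer K (k - j)).eval a * (descPochhammer K j).eval (a + k - 1) := by
    rw [descPochhammer_eval_eq_ascPochhammer, show a + k - 1 - j + 1 = a + (k - j : ℕ) by
      rw [Nat.cast_sub hjk]; ring, ← ascPochhammer_add_eval, Nat.sub_add_cancel hjk]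
  rw [hsplit] at ha ⊢
  rw [ascPochhammer_eval_neg_eq_descPochhammer]
  field_simp [left_ne_zero_of_mul ha, right_ne_zero_of_mul ha]

end RisingFactorialRatio

theorem stmt_7_general (n k : ℕ) (N : ℝ) :
    ∏ i ∈ Finset.range k, (1 - N / ((n : ℝ) + (i : ℝ) + 1)) =
      ∑ j ∈ Finset.range (k + 1),
        (-1 : ℝ) ^ j * (k.choose j : ℝ) *
          (∏ r ∈ Finset.range j, (N - (r : ℝ))) /
          ∏ r ∈ Finset.range j, (((n + k : ℕ) : ℝ) - (r : ℝ)) := by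
  have hpos : ∀ i ∈ range k, (n : ℝ) + 1 + i ≠ 0 := fun i _ => by positivity
  have hA : (ascPochhammer ℝ k).eval ((n : ℝ) + 1) ≠ 0 :=
    (ascPochhammer_pos k _ (by positivity)).ne'
  have hcast : ((n + k : ℕ) : ℝ) = n + 1 + k - 1 := by push_cast; ring
  simp_rw [add_right_comm _ (_ : ℝ) 1, prod_one_sub_div_eq_ascPochhammer_div k _ N hpos,
    ascPochhammer_eval_sub_div_eq_sum k _ N hA, hcast, descPochhammer_eval_eq_prod_range]

theorem stmt_7 (n k : ℕ) (hn : 1 ≤ n) (hk : 1 ≤ k) (N : ℝ) :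
    ∏ i ∈ Finset.range k, (1 - N / ((n : ℝ) + (i : ℝ) + 1)) =
      ∑ j ∈ Finset.range (k + 1),
        (-1 : ℝ) ^ j * (k.choose j : ℝ) *
          (∏ r ∈ Finset.range j, (N - (r : ℝ))) /
          ∏ r ∈ Finset.range j, (((n + k : ℕ) : ℝ) - (r : ℝ)) :=
  stmt_7_general n k N
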